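/- arXiv:0902.1873 — 2 statements merged into one kernel-verified Lean document; each statement's English description precedes it below -/
import Mathlib

section
/- If (a,b)∈[0,1]² and (a',b')∈[0,1]² both satisfy the capillary pressure connection condition, i.e. π̃_1(a)∩π̃_2(b)≠∅ and π̃_1(a')∩π̃_2(b')≠∅, then either (a ≤ a' and b ≤ b') or (a' ≤ a and b' ≤ b). -/
open Set

/-- The monotone graph `π̃` associated to an increasing capillary pressure function `π`. -/
def tildePi (π : ℝ → ℝ) (s : ℝ) : Set ℝ :=
  if s = 0 then Set.Iic (π 0) else if s = 1 then Set.Ici (π 1) else {π s}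

/-- The connection condition `π̃₁(a) ∩ π̃₂(b) ≠ ∅`. -/
def Connects (π₁ π₂ : ℝ → ℝ) (a b : ℝ) : Prop :=
  (tildePi π₁ a ∩ tildePi π₂ b).Nonempty

lemma tildePi_lt {π : ℝ → ℝ} (hmono : StrictMonoOn π (Icc 0 1))
    {s s' p p' : ℝ} (hs : s ∈ Icc (0:ℝ) 1) (hs' : s' ∈ Icc (0:ℝ) 1)
    (hlt : s < s') (hp : p ∈ tildePi π s) (hp' : p' ∈ tildePi π s') : p < p' := by
  have h01 : π 0 < π 1 := hmono (by simp) (by simp) one_pos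
  unfold tildePi at hp hp'
  have hs0 : s' ≠ 0 := by intro h; subst h; linarith [hs.1]
  have hs1 : s ≠ 1 := by intro h; subst h; linarith [hs'.2]
  rw [if_neg hs0] at hp'
  by_cases h0 : s = 0
  · rw [if_pos h0] at hp
    by_cases h1 : s' = 1
    · rw [if_pos h1] at hp'
      calc p ≤ π 0 := hp
        _ < π 1 := h01
        _ ≤ p' := hp'
    · rw [if_neg h1] at hp'
      rw [hp']
      calc p ≤ π 0 := hp
        _ < π s' := hmono (by simp) hs' (by rw [h0] at hlt; exact hlt)
  · rw [if_neg h0, if_neg hs1] at hp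
    rw [hp]
    by_cases h1 : s' = 1
    · rw [if_pos h1] at hp'
      calc π s < π 1 := hmono hs (by simp) (by rw [← h1]; exact hlt)
        _ ≤ p' := hp'
    · rw [if_neg h1] at hp'
      rw [hp']
      exact hmono hs hs' hlt

/-- Monotonicity of the graph transmission condition: two pairs satisfying the capillary
pressure connection condition are ordered componentwise in one direction or the other. -/
theorem stmt12
    (π₁ π₂ : ℝ → ℝ)
    (hπ₁mono : StrictMonoOn π₁ (Icc 0 1)) (hπ₁lip : ∃ K, LipschitzOnWith K π₁ (Icc 0 1))
    (hπ₂mono : StrictMonoOn π₂ (Icc 0 1)) (hπ₂lip : ∃ K, LipschitzOnWith K π₂ (Icc 0 1))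
    (a b a' b' : ℝ)
    (ha : a ∈ Icc (0:ℝ) 1) (hb : b ∈ Icc (0:ℝ) 1)
    (ha' : a' ∈ Icc (0:ℝ) 1) (hb' : b' ∈ Icc (0:ℝ) 1)
    (h : Connects π₁ π₂ a b) (h' : Connects π₁ π₂ a' b') :
    (a ≤ a' ∧ b ≤ b') ∨ (a' ≤ a ∧ b' ≤ b) := by
  obtain ⟨p, hp1, hp2⟩ := h
  obtain ⟨p', hp1', hp2'⟩ := h'
  rcases lt_trichotomy a a' with hA | hA | hA
  · left
    refine ⟨le_of_lt hA, ?_⟩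
    by_contra hB
    push_neg at hB
    have := tildePi_lt hπ₁mono ha ha' hA hp1 hp1'
    have := tildePi_lt hπ₂mono hb' hb hB hp2' hp2
    linarith
  · rcases le_or_gt b b' with hB | hB
    · exact Or.inl ⟨le_of_eq hA, hB⟩
    · exact Or.inr ⟨le_of_eq hA.symm, le_of_lt hB⟩
  · right
    refine ⟨le_of_lt hA, ?_⟩
    by_contra hB
    push_neg at hB
    have := tildePi_lt hπ₁mono ha' ha hA hp1' hp1
    have := tildePi_lt hπ₂mono hb hb' hB hp2 hp2'
    linarith
end

section
/- The set E of measurable functions u_0:Ω→[0,1] such that φ_1∘u_0 coincides a.e. on Ω_1 with a Lipschitz continuous function, φ_2∘u_0 coincides a.e. on Ω_2 with a Lipschitz continuous function, and the one-sided limits u_{0,1}=u_0(0⁻) and u_{0,2}=u_0(0⁺) at x=0 (well defined from these Lipschitz representatives since φ_i is increasing and continuous) satisfy π̃_1(u_{0,1})∩π̃_2(u_{0,2})≠∅, is dense with respect to the L¹(Ω)-norm in the set of all measurable functions u_0:Ω→[0,1]. -/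
/-!
Lipschitz functions are dense in `L¹`, and clamping an approximant to `[0, 1]` only brings it
closer to a `[0, 1]`-valued `u₀`. Replacing the clamped approximant `c` by `min c (|x| / δ)`
costs at most `2δ` in `L¹` and makes both traces at the interface vanish; since
`π̃ᵢ(0) = (-∞, πᵢ(0)]`, the connection condition then holds trivially. Composing with Lipschitz
extensions of `φᵢ` off `[0, 1]` gives the Lipschitz representatives.
-/

open Set MeasureTheory

theorem MeasureTheory.Integrable.exists_lipschitzWith_integral_norm_sub_le
    {E F : Type*} [NormedAddCommGroup E] [NormedSpace ℝ E] [FiniteDimensional ℝ E]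
    [MeasurableSpace E] [BorelSpace E] [NormedAddCommGroup F] [NormedSpace ℝ F]
    {μ : Measure E} [IsFiniteMeasureOnCompacts μ] {f : E → F} (hf : Integrable f μ)
    {ε : ℝ} (hε : 0 < ε) :
    ∃ g : E → F, (∃ K, LipschitzWith K g) ∧ Integrable g μ ∧ ∫ x, ‖f x - g x‖ ∂μ ≤ ε := by
  obtain ⟨g, hg_supp, hg_smooth, hfg⟩ :=
    (memLp_one_iff_integrable.2 hf).exist_eLpNorm_sub_le ENNReal.one_ne_top le_rfl hε
  have hg_int : Integrable g μ := hg_smooth.continuous.integrable_of_hasCompactSupport hg_supp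
  refine ⟨g, hg_smooth.lipschitzWith_of_hasCompactSupport hg_supp (by simp), hg_int, ?_⟩
  calc ∫ x, ‖f x - g x‖ ∂μ = (eLpNorm (f - g) 1 μ).toReal := by
        rw [eLpNorm_one_eq_lintegral_enorm,
          ← integral_norm_eq_lintegral_enorm (hf.sub hg_int).aestronglyMeasurable]
        rfl
    _ ≤ ε := ENNReal.toReal_le_of_le_ofReal hε.le hfg

lemma connects_zero_zero (π₁ π₂ : ℝ → ℝ) : Connects π₁ π₂ 0 0 :=
  ⟨min (π₁ 0) (π₂ 0), by simp [tildePi], by simp [tildePi]⟩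

lemma abs_sub_max_min_le {a : ℝ} (ha : a ∈ Icc 0 1) (b : ℝ) :
    |a - max 0 (min 1 b)| ≤ |a - b| :=
  calc |a - max 0 (min 1 b)| = |max 0 (min 1 a) - max 0 (min 1 b)| := by
        rw [min_eq_right ha.2, max_eq_right ha.1]
    _ ≤ |min 1 a - min 1 b| := by
        rw [max_comm 0 (min 1 a), max_comm 0 (min 1 b)]
        exact abs_max_sub_max_le_abs _ _ _
    _ ≤ |a - b| := by simpa using abs_min_sub_min_le_max 1 a 1 b

noncomputable def clampedCutoff (δ : ℝ) (g : ℝ → ℝ) (x : ℝ) : ℝ :=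
  min (max 0 (min 1 (g x))) (|x| / δ)

section clampedCutoff

variable {δ : ℝ} {g : ℝ → ℝ}

lemma clampedCutoff_mem_Icc (hδ : 0 ≤ δ) (x : ℝ) : clampedCutoff δ g x ∈ Icc 0 1 :=
  ⟨le_min (le_max_left _ _) (by positivity),
    (min_le_left _ _).trans (max_le zero_le_one (min_le_left _ _))⟩

@[simp]
lemma clampedCutoff_apply_zero : clampedCutoff δ g 0 = 0 := by
  simp [clampedCutoff]

lemma LipschitzWith.clampedCutoff {K : NNReal} (hg : LipschitzWith K g) (δ : ℝ) :
    LipschitzWith (max K ‖δ⁻¹‖₊) (clampedCutoff δ g) := by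
  have hramp : LipschitzWith ‖δ⁻¹‖₊ (fun x : ℝ => |x| / δ) := by
    simpa [Function.comp_def, div_eq_inv_mul] using
      (lipschitzWith_smul δ⁻¹).comp (lipschitzWith_one_norm (E := ℝ))
  exact ((hg.const_min 1).const_max 0).min hramp

lemma measurable_clampedCutoff (hg : Measurable g) : Measurable (clampedCutoff δ g) := by
  unfold clampedCutoff; fun_prop

lemma abs_sub_clampedCutoff_le {a : ℝ} (ha : a ∈ Icc 0 1) (hδ : 0 < δ) (x : ℝ) :
    |a - clampedCutoff δ g x| ≤ |a - g x| + (Ioo (-δ) δ).indicator 1 x := by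
  set c := max 0 (min 1 (g x))
  have hc : c ∈ Icc 0 1 := ⟨le_max_left _ _, max_le zero_le_one (min_le_left _ _)⟩
  have hcut : |c - clampedCutoff δ g x| ≤ (Ioo (-δ) δ).indicator 1 x := by
    by_cases hx : x ∈ Ioo (-δ) δ
    · rw [indicator_of_mem hx, Pi.one_apply, clampedCutoff, abs_le]
      have hramp : 0 ≤ |x| / δ := by positivity
      constructor <;> linarith [min_le_left c (|x| / δ), le_min hc.1 hramp, hc.2]
    · have hramp : 1 ≤ |x| / δ := by
        rw [le_div_iff₀ hδ, one_mul, le_abs]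
        by_contra! h
        exact hx ⟨by linarith, h.1⟩
      rw [indicator_of_notMem hx, clampedCutoff, min_eq_left (hc.2.trans hramp), sub_self,
        abs_zero]
  calc |a - clampedCutoff δ g x| ≤ |a - c| + |c - clampedCutoff δ g x| := abs_sub_le _ _ _
    _ ≤ _ := add_le_add (abs_sub_max_min_le ha (g x)) hcut

lemma integral_abs_sub_clampedCutoff_le {S : Set ℝ} (hS : MeasurableSet S) {u : ℝ → ℝ}
    (hu : ∀ x ∈ S, u x ∈ Icc 0 1) (hu_int : IntegrableOn u S) (hg : Measurable g)
    (hg_int : IntegrableOn g S) (hδ : 0 < δ) :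
    ∫ x in S, |u x - clampedCutoff δ g x| ≤ (∫ x in S, |u x - g x|) + 2 * δ := by
  have hind : IntegrableOn ((Ioo (-δ) δ).indicator 1) S :=
    ((integrableOn_const (C := (1 : ℝ)) measure_Ioo_lt_top.ne).integrable_indicator
      measurableSet_Ioo).integrableOn
  have hbound : IntegrableOn (fun x => |u x - g x| + (Ioo (-δ) δ).indicator 1 x) S :=
    (hu_int.sub hg_int).abs.add hind
  have hpt : ∀ x ∈ S, |u x - clampedCutoff δ g x| ≤ |u x - g x| + (Ioo (-δ) δ).indicator 1 x :=
    fun x hx => abs_sub_clampedCutoff_le (hu x hx) hδ x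
  have hlhs : IntegrableOn (fun x => |u x - clampedCutoff δ g x|) S := by
    refine hbound.mono' ?_ ((ae_restrict_iff' hS).2 (ae_of_all _ fun x hx => ?_))
    · exact (hu_int.aestronglyMeasurable.sub
        (measurable_clampedCutoff hg).aestronglyMeasurable).norm
    · simpa using hpt x hx
  calc ∫ x in S, |u x - clampedCutoff δ g x|
      ≤ ∫ x in S, (|u x - g x| + (Ioo (-δ) δ).indicator 1 x) :=
        setIntegral_mono_on hlhs hbound hS hpt
    _ = (∫ x in S, |u x - g x|) + ∫ x in S, (Ioo (-δ) δ).indicator 1 x :=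
        integral_add (hu_int.sub hg_int).abs hind
    _ ≤ (∫ x in S, |u x - g x|) + 2 * δ := by
        gcongr
        rw [integral_indicator_one measurableSet_Ioo, measureReal_restrict_apply measurableSet_Ioo]
        calc volume.real (Ioo (-δ) δ ∩ S) ≤ volume.real (Ioo (-δ) δ) :=
              measureReal_mono inter_subset_left (by simp)
          _ = 2 * δ := by rw [Real.volume_real_Ioo_of_le (by linarith)]; ring

end clampedCutoff

theorem stmt17_general
    (π₁ π₂ φ₁ φ₂ : ℝ → ℝ)
    (hφ₁lip : ∃ K, LipschitzOnWith K φ₁ (Icc 0 1))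
    (hφ₂lip : ∃ K, LipschitzOnWith K φ₂ (Icc 0 1))
    (u₀ : ℝ → ℝ) (hu₀meas : Measurable u₀)
    (hu₀range : ∀ x ∈ Ioo (-1:ℝ) 1, u₀ x ∈ Icc (0:ℝ) 1)
    (ε : ℝ) (hε : 0 < ε) :
    ∃ (v : ℝ → ℝ) (g₁ g₂ : ℝ → ℝ) (v₁ v₂ : ℝ),
      Measurable v ∧
      (∀ x ∈ Ioo (-1:ℝ) 1, v x ∈ Icc (0:ℝ) 1) ∧
      (∃ K, LipschitzWith K g₁) ∧ (∃ K, LipschitzWith K g₂) ∧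
      (∀ᵐ x ∂(volume.restrict (Ioo (-1:ℝ) 0)), φ₁ (v x) = g₁ x) ∧
      (∀ᵐ x ∂(volume.restrict (Ioo (0:ℝ) 1)), φ₂ (v x) = g₂ x) ∧
      v₁ ∈ Icc (0:ℝ) 1 ∧ v₂ ∈ Icc (0:ℝ) 1 ∧
      φ₁ v₁ = g₁ 0 ∧ φ₂ v₂ = g₂ 0 ∧
      Connects π₁ π₂ v₁ v₂ ∧
      (∫ x in Ioo (-1:ℝ) 1, |u₀ x - v x|) < ε := by
  obtain ⟨K₁, hφ₁⟩ := hφ₁lip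
  obtain ⟨ψ₁, hψ₁, hφψ₁⟩ := hφ₁.extend_real
  obtain ⟨K₂, hφ₂⟩ := hφ₂lip
  obtain ⟨ψ₂, hψ₂, hφψ₂⟩ := hφ₂.extend_real
  have hu₀_int : IntegrableOn u₀ (Ioo (-1) 1) :=
    Measure.integrableOn_of_bounded (M := 1) (by simp) hu₀meas.aestronglyMeasurable
      ((ae_restrict_iff' measurableSet_Ioo).2 (ae_of_all _ fun x hx =>
        abs_le.2 ⟨by linarith [(hu₀range x hx).1], (hu₀range x hx).2⟩))
  obtain ⟨g, ⟨K, hg⟩, hg_int, hu₀g⟩ :=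
    Integrable.exists_lipschitzWith_integral_norm_sub_le hu₀_int (half_pos hε)
  set v := clampedCutoff (ε / 8) g
  have hv : LipschitzWith _ v := hg.clampedCutoff _
  have hv01 : ∀ x, v x ∈ Icc 0 1 := clampedCutoff_mem_Icc (by positivity)
  have h0 : (0 : ℝ) ∈ Icc 0 1 := left_mem_Icc.2 zero_le_one
  refine ⟨v, ψ₁ ∘ v, ψ₂ ∘ v, 0, 0, hv.continuous.measurable, fun x _ => hv01 x,
    ⟨_, hψ₁.comp hv⟩, ⟨_, hψ₂.comp hv⟩, ae_of_all _ fun x => hφψ₁ (hv01 x),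
    ae_of_all _ fun x => hφψ₂ (hv01 x), h0, h0, by simpa [v] using hφψ₁ h0,
    by simpa [v] using hφψ₂ h0, connects_zero_zero π₁ π₂, ?_⟩
  calc ∫ x in Ioo (-1) 1, |u₀ x - v x|
      ≤ (∫ x in Ioo (-1) 1, |u₀ x - g x|) + 2 * (ε / 8) :=
        integral_abs_sub_clampedCutoff_le measurableSet_Ioo hu₀range hu₀_int
          hg.continuous.measurable hg_int (by positivity)
    _ ≤ ε / 2 + 2 * (ε / 8) := by simpa only [Real.norm_eq_abs] using add_le_add_left hu₀g _
    _ < ε := by linarith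

/-- The set `E` of initial data `u₀ : Ω → [0,1]` such that `φ_i ∘ u₀` is (a.e. equal to)
a Lipschitz function on each `Ω_i` and whose one-sided traces at the interface satisfy the
capillary pressure connection condition, is dense in `{u₀ : Ω → [0,1] measurable}` for the
`L¹(Ω)`-norm. -/
theorem stmt17
    (π₁ π₂ φ₁ φ₂ : ℝ → ℝ)
    (hπ₁mono : StrictMonoOn π₁ (Icc 0 1)) (hπ₁lip : ∃ K, LipschitzOnWith K π₁ (Icc 0 1))
    (hπ₂mono : StrictMonoOn π₂ (Icc 0 1)) (hπ₂lip : ∃ K, LipschitzOnWith K π₂ (Icc 0 1))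
    (hφ₁mono : StrictMonoOn φ₁ (Icc 0 1)) (hφ₁lip : ∃ K, LipschitzOnWith K φ₁ (Icc 0 1))
    (hφ₁zero : φ₁ 0 = 0)
    (hφ₂mono : StrictMonoOn φ₂ (Icc 0 1)) (hφ₂lip : ∃ K, LipschitzOnWith K φ₂ (Icc 0 1))
    (hφ₂zero : φ₂ 0 = 0)
    (u₀ : ℝ → ℝ) (hu₀meas : Measurable u₀)
    (hu₀range : ∀ x ∈ Ioo (-1:ℝ) 1, u₀ x ∈ Icc (0:ℝ) 1)
    (ε : ℝ) (hε : 0 < ε) :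
    ∃ (v : ℝ → ℝ) (g₁ g₂ : ℝ → ℝ) (v₁ v₂ : ℝ),
      Measurable v ∧
      (∀ x ∈ Ioo (-1:ℝ) 1, v x ∈ Icc (0:ℝ) 1) ∧
      (∃ K, LipschitzWith K g₁) ∧ (∃ K, LipschitzWith K g₂) ∧
      (∀ᵐ x ∂(volume.restrict (Ioo (-1:ℝ) 0)), φ₁ (v x) = g₁ x) ∧
      (∀ᵐ x ∂(volume.restrict (Ioo (0:ℝ) 1)), φ₂ (v x) = g₂ x) ∧
      v₁ ∈ Icc (0:ℝ) 1 ∧ v₂ ∈ Icc (0:ℝ) 1 ∧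
      φ₁ v₁ = g₁ 0 ∧ φ₂ v₂ = g₂ 0 ∧
      Connects π₁ π₂ v₁ v₂ ∧
      (∫ x in Ioo (-1:ℝ) 1, |u₀ x - v x|) < ε :=
  stmt17_general π₁ π₂ φ₁ φ₂ hφ₁lip hφ₂lip u₀ hu₀meas hu₀range ε hε
end
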